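/- arXiv:2401.01034 — 3 statements merged into one kernel-verified Lean document; each statement's English description precedes it below -/
import Mathlib

section
/- If real numbers λ₁ ≥ λ₂ ≥ ... ≥ λₙ (with n ≥ 2) satisfy ∑ᵢ arctan(λᵢ) = Θ with Θ ≥ (n-2)π/2, then λ_{n-1} ≥ |λₙ|. -/
open Real

/-! The `n - 2` largest terms each contribute less than `π / 2`, so the two smallest satisfy
`arctan λₙ₋₁ + arctan λₙ ≥ 0`, i.e. `λₙ₋₁ ≥ -λₙ` since `arctan` is odd and increasing. -/

namespace Real

theorem abs_le_of_arctan_add_arctan_nonneg {a b : ℝ} (hba : b ≤ a)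
    (hsum : 0 ≤ arctan a + arctan b) : |b| ≤ a := by
  have hneg : arctan (-b) ≤ arctan a := by
    rw [arctan_neg]
    linarith
  exact abs_le.mpr ⟨by linarith [arctan_strictMono.le_iff_le.mp hneg], hba⟩

theorem sum_arctan_le_add_arctan_add_arctan {ι : Type*} [Fintype ι] (f : ι → ℝ) {i j : ι}
    (hij : i ≠ j) :
    ∑ k, arctan (f k) ≤ ((Fintype.card ι : ℝ) - 2) * (π / 2) + (arctan (f i) + arctan (f j)) := by
  classical
  have hcard : ((Finset.univ \ {i, j} : Finset ι).card : ℝ) = (Fintype.card ι : ℝ) - 2 := by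
    have h2 : 2 ≤ Fintype.card ι := by
      simpa [Finset.card_pair hij] using Finset.card_le_univ ({i, j} : Finset ι)
    rw [Finset.card_sdiff_of_subset (Finset.subset_univ _), Finset.card_pair hij,
      Finset.card_univ, Nat.cast_sub h2, Nat.cast_ofNat]
  have hrest : ∑ k ∈ Finset.univ \ {i, j}, arctan (f k) ≤ ((Fintype.card ι : ℝ) - 2) * (π / 2) := by
    rw [← hcard, ← nsmul_eq_mul]
    exact Finset.sum_le_card_nsmul _ _ _ fun k _ => (arctan_lt_pi_div_two _).le
  rw [← Finset.sum_sdiff (Finset.subset_univ {i, j}), Finset.sum_pair hij]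
  exact add_le_add_left hrest _

end Real

/-- If λ₁ ≥ ⋯ ≥ λₙ (n ≥ 2) solve ∑ arctan λᵢ = Θ with Θ ≥ (n-2)π/2,
then λ_{n-1} ≥ |λₙ|. -/
theorem slag_lambda_pred_ge_abs_last (n : ℕ) (hn : 2 ≤ n) (lam : Fin n → ℝ) (Θ : ℝ)
    (hmono : ∀ i j : Fin n, i ≤ j → lam j ≤ lam i)
    (heq : ∑ i, Real.arctan (lam i) = Θ)
    (hΘ : ((n : ℝ) - 2) * Real.pi / 2 ≤ Θ) :
    |lam ⟨n - 1, by omega⟩| ≤ lam ⟨n - 2, by omega⟩ := by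
  have hne : (⟨n - 2, by omega⟩ : Fin n) ≠ ⟨n - 1, by omega⟩ := by
    simp only [ne_eq, Fin.mk.injEq]
    omega
  have hsum := sum_arctan_le_add_arctan_add_arctan lam hne
  rw [Fintype.card_fin, heq] at hsum
  refine abs_le_of_arctan_add_arctan_nonneg (hmono _ _ (Fin.mk_le_mk.mpr (by omega))) ?_
  linarith
end

section
/- If real numbers λ₁ ≥ λ₂ ≥ ... ≥ λₙ (with n ≥ 2) satisfy ∑ᵢ arctan(λᵢ) = Θ with Θ ≥ (n-2)π/2, then for every 1 ≤ k ≤ n-1 the elementary symmetric polynomial satisfies σ_k(λ₁,...,λₙ) ≥ 0. -/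
/-!
If every `λᵢ ≥ 0` there is nothing to prove. Otherwise, as each `arctan λᵢ < π / 2`, the phase
condition forces `arctan λᵢ + arctan λⱼ ≥ 0` for `i ≠ j`, so a single entry `λ_L = -μ` is negative
and all others are positive. Rewriting it with `arctan (1 / x) = π / 2 - arctan x` and using the
subadditivity of `arctan` on `[0, ∞)` turns the phase condition into `∑_{i ≠ L} 1 / λᵢ ≤ 1 / μ`.
Writing `λ'` for the positive entries, `σ_k(λ) = σ_k(λ') - μ σ_{k-1}(λ')`, and
`σ_{k-1}(λ') ≤ σ_k(λ') / μ` follows by induction on the number of entries: peeling off an entry `a`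
replaces the bound `1 / μ` on the sum of reciprocals by `1 / μ - 1 / a`.
-/

open Real

/-- The k-th elementary symmetric polynomial of μ₁,…,μₙ. -/
noncomputable def esymmF {n : ℕ} (k : ℕ) (μ : Fin n → ℝ) : ℝ :=
  ∑ s ∈ Finset.powersetCard k (Finset.univ : Finset (Fin n)), ∏ i ∈ s, μ i

open Finset

namespace Multiset

section CommSemiring

variable {R : Type*} [CommSemiring R]

theorem esymm_zero (s : Multiset R) : esymm s 0 = 1 := by
  simp [esymm, powersetCard_zero_left]

theorem esymm_cons_succ (a : R) (s : Multiset R) (k : ℕ) :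
    esymm (a ::ₘ s) (k + 1) = esymm s (k + 1) + a * esymm s k := by
  simp [esymm, powersetCard_cons, map_map, sum_map_mul_left]

theorem esymm_nonneg [PartialOrder R] [IsOrderedRing R] {s : Multiset R} (hs : ∀ x ∈ s, 0 ≤ x)
    (k : ℕ) : 0 ≤ esymm s k :=
  sum_nonneg <| by
    simp only [mem_map, mem_powersetCard]
    rintro _ ⟨t, ⟨hts, -⟩, rfl⟩
    exact prod_nonneg fun x hx => hs x (mem_of_le hts hx)

end CommSemiring

theorem esymm_le_mul_esymm_succ {K : Type*} [Field K] [LinearOrder K] [IsStrictOrderedRing K]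
    {s : Multiset K} (hs : ∀ x ∈ s, 0 < x) {ν : K} (hν : (s.map (·⁻¹)).sum ≤ ν) {k : ℕ}
    (hk : k < card s) : esymm s k ≤ ν * esymm s (k + 1) := by
  induction s using Multiset.induction_on generalizing ν k with
  | empty => simp at hk
  | cons a t ih =>
    have ha : 0 < a := hs a (mem_cons_self a t)
    have ht : ∀ x ∈ t, 0 < x := fun x hx => hs x (mem_cons_of_mem hx)
    have hσ : ∀ i, 0 ≤ esymm t i := esymm_nonneg fun x hx => (ht x hx).le
    have hsum_t : 0 ≤ (t.map (·⁻¹)).sum :=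
      sum_nonneg <| forall_mem_map_iff.2 fun x hx => inv_nonneg.2 (ht x hx).le
    rw [map_cons, sum_cons] at hν
    have haν : 1 ≤ a * ν := by
      have := mul_le_mul_of_nonneg_left hν ha.le
      rw [mul_add, mul_inv_cancel₀ ha.ne'] at this
      nlinarith
    have hν₀ : 0 ≤ ν := by nlinarith
    cases k with
    | zero =>
      rw [esymm_cons_succ, esymm_zero, esymm_zero]
      nlinarith [hσ 1]
    | succ j =>
      have hIH : esymm t j ≤ (ν - a⁻¹) * esymm t (j + 1) :=
        ih ht (by linarith) (by rw [card_cons] at hk; omega)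
      rw [esymm_cons_succ, esymm_cons_succ]
      calc esymm t (j + 1) + a * esymm t j
          ≤ esymm t (j + 1) + a * ((ν - a⁻¹) * esymm t (j + 1)) := by gcongr
        _ = a * ν * esymm t (j + 1) := by field_simp; ring
        _ ≤ ν * (esymm t (j + 1 + 1) + a * esymm t (j + 1)) := by nlinarith [hσ (j + 2)]

end Multiset

namespace Real

theorem arctan_add_le_add_arctan {a b : ℝ} (ha : 0 ≤ a) (hb : 0 ≤ b) :
    arctan (a + b) ≤ arctan a + arctan b := by
  rcases lt_or_ge (a * b) 1 with hab | hab
  · rw [arctan_add hab, arctan_le_arctan_iff, le_div_iff₀ (by linarith)]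
    nlinarith [mul_nonneg (add_nonneg ha hb) (mul_nonneg ha hb)]
  · -- here `arctan a + arctan b ≥ π / 2`, since `a ≥ b⁻¹`
    have hb' : 0 < b := by nlinarith
    have hba : b⁻¹ ≤ a := by rwa [inv_le_iff_one_le_mul₀ hb']
    have := arctan_mono hba
    rw [arctan_inv_of_pos hb'] at this
    linarith [arctan_lt_pi_div_two (a + b)]

theorem arctan_sum_le_sum_arctan {ι : Type*} {s : Finset ι} {f : ι → ℝ}
    (hf : ∀ i ∈ s, 0 ≤ f i) : arctan (∑ i ∈ s, f i) ≤ ∑ i ∈ s, arctan (f i) := by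
  induction s using Finset.cons_induction with
  | empty => simp
  | cons a s ha ih =>
    rw [forall_mem_cons] at hf
    rw [sum_cons, sum_cons]
    exact (arctan_add_le_add_arctan hf.1 (sum_nonneg hf.2)).trans (by linarith [ih hf.2])

end Real

def IsSupercriticalPhase {ι : Type*} (s : Finset ι) (f : ι → ℝ) : Prop :=
  ((#s : ℝ) - 2) * π / 2 ≤ ∑ i ∈ s, arctan (f i)

namespace IsSupercriticalPhase

variable {ι : Type*} [DecidableEq ι] {s : Finset ι} {f : ι → ℝ}

theorem arctan_add_arctan_nonneg (h : IsSupercriticalPhase s f) {i j : ι} (hi : i ∈ s)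
    (hj : j ∈ s) (hij : i ≠ j) : 0 ≤ arctan (f i) + arctan (f j) := by
  have hj' : j ∈ s.erase i := mem_erase.2 ⟨hij.symm, hj⟩
  have hsplit : ∑ l ∈ s, arctan (f l)
      = arctan (f i) + arctan (f j) + ∑ l ∈ (s.erase i).erase j, arctan (f l) := by
    rw [← add_sum_erase s _ hi, ← add_sum_erase _ _ hj', add_assoc]
  have hcard : (#((s.erase i).erase j) : ℝ) + 1 + 1 = #s := by
    rw [← card_erase_add_one hi, ← card_erase_add_one hj']; push_cast; ring
  have hrest : ∑ l ∈ (s.erase i).erase j, arctan (f l) ≤ #((s.erase i).erase j) • (π / 2) :=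
    sum_le_card_nsmul _ _ _ fun l _ => (arctan_lt_pi_div_two _).le
  rw [IsSupercriticalPhase, ← hcard] at h
  rw [nsmul_eq_mul] at hrest
  linarith

theorem pos_of_mem_erase (h : IsSupercriticalPhase s f) {L : ι} (hL : L ∈ s) (hfL : f L < 0)
    {i : ι} (hi : i ∈ s.erase L) : 0 < f i := by
  have := h.arctan_add_arctan_nonneg (mem_of_mem_erase hi) hL (ne_of_mem_erase hi)
  have := arctan_lt_zero.2 hfL
  exact arctan_pos.1 (by linarith)

theorem sum_inv_erase_le (h : IsSupercriticalPhase s f) {L : ι} (hL : L ∈ s) (hfL : f L < 0) :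
    ∑ i ∈ s.erase L, (f i)⁻¹ ≤ (-f L)⁻¹ := by
  have hpos := fun i (hi : i ∈ s.erase L) => h.pos_of_mem_erase hL hfL hi
  have hcard : (#(s.erase L) : ℝ) + 1 = #s := by exact_mod_cast card_erase_add_one hL
  have hsum := add_sum_erase s (fun i => arctan (f i)) hL
  rw [IsSupercriticalPhase, ← hcard] at h
  rw [← arctan_le_arctan_iff]
  calc arctan (∑ i ∈ s.erase L, (f i)⁻¹)
      ≤ ∑ i ∈ s.erase L, arctan (f i)⁻¹ :=
        arctan_sum_le_sum_arctan fun i hi => (inv_pos.2 (hpos i hi)).le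
    _ = #(s.erase L) * (π / 2) - ∑ i ∈ s.erase L, arctan (f i) := by
        rw [sum_congr rfl fun i hi => arctan_inv_of_pos (hpos i hi), sum_sub_distrib,
          sum_const, nsmul_eq_mul]
    _ ≤ π / 2 + arctan (f L) := by linarith
    _ = arctan (-f L)⁻¹ := by rw [arctan_inv_of_pos (neg_pos.2 hfL), arctan_neg]; ring

end IsSupercriticalPhase

theorem slag_esymm_nonneg_general (n : ℕ) (lam : Fin n → ℝ) (Θ : ℝ)
    (heq : ∑ i, Real.arctan (lam i) = Θ)
    (hΘ : ((n : ℝ) - 2) * Real.pi / 2 ≤ Θ) :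
    ∀ k : ℕ, 1 ≤ k → k ≤ n - 1 → 0 ≤ esymmF k lam := by
  intro k hk1 hkn
  rw [esymmF, ← esymm_map_val]
  by_cases hnonneg : ∀ i, 0 ≤ lam i
  · exact Multiset.esymm_nonneg (by simpa using hnonneg) k
  obtain ⟨L, hL⟩ := not_forall.1 hnonneg
  rw [not_le] at hL
  have hphase : IsSupercriticalPhase univ lam := by
    rwa [IsSupercriticalPhase, card_univ, Fintype.card_fin, heq]
  set A := univ.erase L
  set σ := (A.val.map lam).esymm
  have hsplit : univ.val.map lam = lam L ::ₘ A.val.map lam := by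
    rw [erase_val, ← Multiset.map_cons, Multiset.cons_erase (mem_univ L)]
  obtain ⟨j, rfl⟩ : ∃ j, k = j + 1 := ⟨k - 1, by omega⟩
  have hkey : σ j ≤ (-lam L)⁻¹ * σ (j + 1) := by
    refine Multiset.esymm_le_mul_esymm_succ ?_ ?_ ?_
    · exact Multiset.forall_mem_map_iff.2 fun i hi => hphase.pos_of_mem_erase (mem_univ L) hL hi
    · rw [Multiset.map_map]
      exact hphase.sum_inv_erase_le (mem_univ L) hL
    · rw [Multiset.card_map, card_val, card_erase_of_mem (mem_univ L), card_univ,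
        Fintype.card_fin]
      omega
  rw [le_inv_mul_iff₀ (neg_pos.2 hL)] at hkey
  rw [hsplit, Multiset.esymm_cons_succ]
  linarith

/-- If λ₁ ≥ ⋯ ≥ λₙ (n ≥ 2) solve ∑ arctan λᵢ = Θ with Θ ≥ (n-2)π/2,
then σ_k(λ) ≥ 0 for all 1 ≤ k ≤ n-1. -/
theorem slag_esymm_nonneg (n : ℕ) (hn : 2 ≤ n) (lam : Fin n → ℝ) (Θ : ℝ)
    (hmono : ∀ i j : Fin n, i ≤ j → lam j ≤ lam i)
    (heq : ∑ i, Real.arctan (lam i) = Θ)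
    (hΘ : ((n : ℝ) - 2) * Real.pi / 2 ≤ Θ) :
    ∀ k : ℕ, 1 ≤ k → k ≤ n - 1 → 0 ≤ esymmF k lam :=
  slag_esymm_nonneg_general n lam Θ heq hΘ
end

section
/- Let η, a be positive smooth functions near a point p where η·a attains an interior local maximum, and suppose a satisfies the Jacobi-type inequality Δ_g a ≥ 2|∇_g a|²/a at p. Then a·Δ_g η ≤ 0 at p; in particular if η = e^{(1-φ)/h} - 1 > 0 with φ smooth, then |∇_g φ|² ≤ h·Δ_g φ at p. -/
open Real

noncomputable def pd {n : ℕ} (i : Fin n) (f : EuclideanSpace ℝ (Fin n) → ℝ)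
    (x : EuclideanSpace ℝ (Fin n)) : ℝ :=
  fderiv ℝ f x (EuclideanSpace.single i 1)

section KorevaarHelpers
open Filter Set Topology


-- 1D second derivative test at a local max
lemma secondDeriv_nonpos_of_isLocalMax {g : ℝ → ℝ} {Q : ℝ}
    (hdiff : ∀ᶠ t in 𝓝 (0:ℝ), DifferentiableAt ℝ g t)
    (hQ : HasDerivAt (deriv g) Q 0) (hmax : IsLocalMax g 0) : Q ≤ 0 := by
  by_contra hQ'
  push_neg at hQ'
  have h0 : deriv g 0 = 0 := hmax.deriv_eq_zero
  have hslope : Tendsto (slope (deriv g) 0) (𝓝[≠] (0:ℝ)) (𝓝 Q) :=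
    hasDerivAt_iff_tendsto_slope.mp hQ
  have h1 : ∀ᶠ t in 𝓝[>] (0:ℝ), 0 < deriv g t := by
    have h2 : ∀ᶠ t in 𝓝[≠] (0:ℝ), 0 < slope (deriv g) 0 t :=
      hslope.eventually (eventually_gt_nhds hQ')
    have h3 := h2.filter_mono (nhdsWithin_mono 0 (fun t ht => ne_of_gt ht))
    filter_upwards [h3, self_mem_nhdsWithin] with t hts ht
    have hs : slope (deriv g) 0 t = deriv g t / t := by
      simp [slope_def_field, h0]
    rw [hs] at hts
    have := mul_pos hts (show (0:ℝ) < t from ht)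
    rwa [div_mul_cancel₀] at this
    exact ne_of_gt ht
  obtain ⟨u, hu, hsubu⟩ := mem_nhdsGT_iff_exists_Ioo_subset.mp h1
  have hu0 : (0:ℝ) < u := hu
  obtain ⟨δ, hδ0, hδ⟩ := Metric.eventually_nhds_iff.mp (hdiff.and hmax)
  set b := min u δ / 2 with hb
  have hb0 : 0 < b := by positivity
  have hbu : b < u := by
    have := min_le_left u δ; nlinarith
  have hbδ : b < δ := by
    have := min_le_right u δ; nlinarith
  have hmono : StrictMonoOn g (Icc 0 b) := by
    apply strictMonoOn_of_deriv_pos (convex_Icc 0 b)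
    · intro t ht
      have hmem : dist t 0 < δ := by
        simp only [Real.dist_eq, sub_zero, abs_of_nonneg ht.1]
        exact lt_of_le_of_lt ht.2 hbδ
      exact ((hδ hmem).1.continuousAt).continuousWithinAt
    · intro t ht
      rw [interior_Icc] at ht
      exact hsubu ⟨ht.1, lt_trans ht.2 hbu⟩
  have hgb : g 0 < g b := hmono (left_mem_Icc.mpr hb0.le) (right_mem_Icc.mpr hb0.le) hb0
  have : g b ≤ g 0 := by
    have hmem : dist b 0 < δ := by
      simp only [Real.dist_eq, sub_zero, abs_of_pos hb0]
      exact hbδ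
    exact (hδ hmem).2
  linarith

variable {n : ℕ}


lemma euclid_decomp (v : EuclideanSpace ℝ (Fin n)) :
    v = ∑ j, v j • EuclideanSpace.single j (1:ℝ) := by
  ext k
  rw [WithLp.ofLp_sum, Finset.sum_apply]
  simp [EuclideanSpace.single_apply]

lemma fderiv_apply_decomp (f : EuclideanSpace ℝ (Fin n) → ℝ) (x v : EuclideanSpace ℝ (Fin n)) :
    fderiv ℝ f x v = ∑ j, v j * pd j f x := by
  conv_lhs => rw [euclid_decomp v]
  rw [map_sum]
  simp [pd, smul_eq_mul]

lemma contDiffAt_pd {f : EuclideanSpace ℝ (Fin n) → ℝ} {x : EuclideanSpace ℝ (Fin n)}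
    (hf : ContDiffAt ℝ (⊤ : ℕ∞) f x) (j : Fin n) : ContDiffAt ℝ (⊤ : ℕ∞) (pd j f) x := by
  have h1 : ContDiffAt ℝ (⊤ : ℕ∞) (fderiv ℝ f) x := hf.fderiv_right (by simp)
  exact h1.clm_apply contDiffAt_const

lemma diffAt_pd {f : EuclideanSpace ℝ (Fin n) → ℝ} {x : EuclideanSpace ℝ (Fin n)}
    (hf : ContDiffAt ℝ (⊤ : ℕ∞) f x) (j : Fin n) : DifferentiableAt ℝ (pd j f) x :=
  (contDiffAt_pd hf j).differentiableAt (by simp)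

lemma pd_congr {f g : EuclideanSpace ℝ (Fin n) → ℝ} {x : EuclideanSpace ℝ (Fin n)}
    (hfg : f =ᶠ[𝓝 x] g) (i : Fin n) : pd i f x = pd i g x := by
  rw [pd, pd, hfg.fderiv_eq]

lemma pd_mul {f g : EuclideanSpace ℝ (Fin n) → ℝ} {x : EuclideanSpace ℝ (Fin n)}
    (hf : DifferentiableAt ℝ f x) (hg : DifferentiableAt ℝ g x) (i : Fin n) :
    pd i (fun y => f y * g y) x = f x * pd i g x + g x * pd i f x := by
  rw [pd, fderiv_fun_mul hf hg]; simp [pd]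

lemma pd_add {f g : EuclideanSpace ℝ (Fin n) → ℝ} {x : EuclideanSpace ℝ (Fin n)}
    (hf : DifferentiableAt ℝ f x) (hg : DifferentiableAt ℝ g x) (i : Fin n) :
    pd i (fun y => f y + g y) x = pd i f x + pd i g x := by
  rw [pd, fderiv_fun_add hf hg]; simp [pd]

lemma pd_exp {f : EuclideanSpace ℝ (Fin n) → ℝ} {x : EuclideanSpace ℝ (Fin n)}
    (hf : DifferentiableAt ℝ f x) (i : Fin n) :
    pd i (fun y => Real.exp (f y)) x = Real.exp (f x) * pd i f x := by
  rw [pd, fderiv_exp hf]; simp [pd]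

lemma pd_sub_const {f : EuclideanSpace ℝ (Fin n) → ℝ} {x : EuclideanSpace ℝ (Fin n)}
    (c : ℝ) (i : Fin n) : pd i (fun y => f y - c) x = pd i f x := by
  rw [pd, fderiv_sub_const]; rfl

lemma pd_const_sub_div {f : EuclideanSpace ℝ (Fin n) → ℝ} {x : EuclideanSpace ℝ (Fin n)}
    (hf : DifferentiableAt ℝ f x) (c h : ℝ) (i : Fin n) :
    pd i (fun y => (c - f y) / h) x = -(pd i f x) / h := by
  have : (fun y => (c - f y) / h) = fun y => h⁻¹ * (c - f y) := by
    funext y; ring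
  rw [this, pd, fderiv_const_mul (by fun_prop) h⁻¹, fderiv_const_sub]
  simp [pd]; ring

lemma quad_nonpos {f : EuclideanSpace ℝ (Fin n) → ℝ} {p : EuclideanSpace ℝ (Fin n)}
    (hf : ContDiffAt ℝ (⊤ : ℕ∞) f p) (hmax : IsLocalMax f p) (v : EuclideanSpace ℝ (Fin n)) :
    ∑ j, ∑ i, v j * (v i * pd i (pd j f) p) ≤ 0 := by
  set L : ℝ → EuclideanSpace ℝ (Fin n) := fun t => p + t • v with hLdef
  have hL0 : L 0 = p := by simp [hLdef]
  have hLt : Continuous L := by fun_prop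
  have hLtend : Tendsto L (𝓝 0) (𝓝 p) := by
    have := hLt.tendsto 0
    rwa [hL0] at this
  have hLD : ∀ t : ℝ, HasDerivAt L v t := by
    intro t
    have h1 : HasDerivAt (fun s : ℝ => s • v) ((1:ℝ) • v) t :=
      (hasDerivAt_id t).smul_const v
    simpa [hLdef] using h1.const_add p
  set g : ℝ → ℝ := fun t => f (L t) with hg
  have hev : ∀ᶠ x in 𝓝 p, DifferentiableAt ℝ f x := by
    have h1 : ContDiffAt ℝ 1 f p := hf.of_le (by simp)
    filter_upwards [h1.eventually (by simp)] with x hx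
    exact hx.differentiableAt one_ne_zero
  have hgdiff : ∀ᶠ t in 𝓝 (0:ℝ), DifferentiableAt ℝ g t := by
    filter_upwards [hLtend.eventually hev] with t ht
    exact ht.comp t (hLD t).differentiableAt
  have hmaxg : IsLocalMax g 0 := by
    have h1 : ∀ᶠ t in 𝓝 (0:ℝ), f (L t) ≤ f p := hLtend.eventually hmax
    filter_upwards [h1] with t ht
    simpa [hg, hL0] using ht
  set pdv : EuclideanSpace ℝ (Fin n) → ℝ := fun x => ∑ j, v j * pd j f x with hpdvdef
  have hderiv : ∀ᶠ t in 𝓝 (0:ℝ), deriv g t = pdv (L t) := by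
    filter_upwards [hLtend.eventually hev] with t ht
    have h1 : HasDerivAt g (fderiv ℝ f (L t) v) t :=
      ht.hasFDerivAt.comp_hasDerivAt t (hLD t)
    rw [h1.deriv, fderiv_apply_decomp]
  have hpdvdiff : DifferentiableAt ℝ pdv p := by
    apply DifferentiableAt.fun_sum
    intro j _
    exact (diffAt_pd hf j).const_mul _
  have hQval : fderiv ℝ pdv p v = ∑ j, ∑ i, v j * (v i * pd i (pd j f) p) := by
    rw [hpdvdef]
    rw [fderiv_fun_sum (fun j _ => (diffAt_pd hf j).const_mul _)]
    rw [ContinuousLinearMap.sum_apply]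
    refine Finset.sum_congr rfl fun j _ => ?_
    rw [fderiv_const_mul (diffAt_pd hf j)]
    rw [ContinuousLinearMap.smul_apply, fderiv_apply_decomp, smul_eq_mul, Finset.mul_sum]
  have hQd : HasDerivAt (deriv g) (∑ j, ∑ i, v j * (v i * pd i (pd j f) p)) 0 := by
    have h1 : HasDerivAt (fun t => pdv (L t)) (fderiv ℝ pdv p v) 0 := by
      have h0 : HasFDerivAt pdv (fderiv ℝ pdv p) (L 0) := hL0 ▸ hpdvdiff.hasFDerivAt
      exact h0.comp_hasDerivAt 0 (hLD 0)
    rw [hQval] at h1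
    exact h1.congr_of_eventuallyEq (hderiv.mono fun t ht => ht)
  exact secondDeriv_nonpos_of_isLocalMax hgdiff hQd hmaxg

lemma lap_nonpos {f : EuclideanSpace ℝ (Fin n) → ℝ} {p : EuclideanSpace ℝ (Fin n)}
    (hf : ContDiffAt ℝ (⊤ : ℕ∞) f p) (hmax : IsLocalMax f p)
    {M : Matrix (Fin n) (Fin n) ℝ} (hM : M.PosSemidef) :
    ∑ i, ∑ j, M i j * pd i (pd j f) p ≤ 0 := by
  obtain ⟨B, rfl⟩ : ∃ B : Matrix (Fin n) (Fin n) ℝ, M = B.conjTranspose * B := by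
    open scoped MatrixOrder in exact CStarAlgebra.nonneg_iff_eq_star_mul_self.mp hM.nonneg
  set w : Fin n → EuclideanSpace ℝ (Fin n) := fun k => (WithLp.equiv 2 _).symm (B k) with hw
  have hwapp : ∀ k i, w k i = B k i := fun k i => rfl
  have swap3 : ∀ (t : Fin n → Fin n → Fin n → ℝ),
      ∑ i, ∑ j, ∑ k, t i j k = ∑ k, ∑ j, ∑ i, t i j k := by
    intro t
    calc ∑ i, ∑ j, ∑ k, t i j k
        = ∑ j, ∑ i, ∑ k, t i j k := Finset.sum_comm
      _ = ∑ j, ∑ k, ∑ i, t i j k := Finset.sum_congr rfl fun j _ => Finset.sum_comm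
      _ = ∑ k, ∑ j, ∑ i, t i j k := Finset.sum_comm
  have key : ∑ i, ∑ j, (B.conjTranspose * B) i j * pd i (pd j f) p
      = ∑ k, ∑ j, ∑ i, (w k) j * ((w k) i * pd i (pd j f) p) := by
    simp only [Matrix.mul_apply, Matrix.conjTranspose_apply, star_trivial, hwapp,
      Finset.sum_mul]
    rw [swap3 (fun i j k => B k i * B k j * pd i (pd j f) p)]
    refine Finset.sum_congr rfl fun k _ => Finset.sum_congr rfl fun j _ =>
      Finset.sum_congr rfl fun i _ => by ring
  rw [key]
  exact Finset.sum_nonpos fun k _ => quad_nonpos hf hmax (w k)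

lemma pd_neg_div {F : EuclideanSpace ℝ (Fin n) → ℝ} {x : EuclideanSpace ℝ (Fin n)}
    (hF : DifferentiableAt ℝ F x) (h : ℝ) (i : Fin n) :
    pd i (fun y => -F y / h) x = -(pd i F x) / h := by
  have e : (fun y => -F y / h) = fun y => (-h⁻¹) * F y := funext fun y => by ring
  rw [e, pd, fderiv_const_mul hF]
  simp [pd]; ring

end KorevaarHelpers

/-- Korevaar cutoff computation: at an interior local maximum p of η·a where a satisfies the
Jacobi-type inequality Δ_g a ≥ 2|∇_g a|²/a, one has a·Δ_g η ≤ 0; in particular, for the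
exponential cutoff η = e^{(1-φ)/h} - 1 > 0 this gives |∇_g φ|² ≤ h·Δ_g φ at p. -/
theorem korevaar_cutoff_max (n : ℕ) (s : Set (EuclideanSpace ℝ (Fin n))) (hs : IsOpen s)
    (p : EuclideanSpace ℝ (Fin n)) (hp : p ∈ s)
    (gInv : EuclideanSpace ℝ (Fin n) → Matrix (Fin n) (Fin n) ℝ)
    (hgsym : ∀ x ∈ s, (gInv x).IsHermitian)
    (hgpos : ∀ x ∈ s, (gInv x).PosSemidef)
    (a φ : EuclideanSpace ℝ (Fin n) → ℝ)
    (ha : ContDiffOn ℝ (⊤ : ℕ∞) a s) (hφ : ContDiffOn ℝ (⊤ : ℕ∞) φ s)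
    (hapos : ∀ x ∈ s, 0 < a x)
    (h : ℝ) (hh : 0 < h)
    (η : EuclideanSpace ℝ (Fin n) → ℝ)
    (hη : ∀ x, η x = Real.exp ((1 - φ x) / h) - 1)
    (hηp : 0 < η p)
    (hmax : IsLocalMax (fun x => η x * a x) p)
    (hJac : 2 * (∑ i, ∑ j, gInv p i j * pd i a p * pd j a p) / a p ≤
      ∑ i, ∑ j, gInv p i j * pd i (pd j a) p) :
    a p * (∑ i, ∑ j, gInv p i j * pd i (pd j η) p) ≤ 0 ∧
    (∑ i, ∑ j, gInv p i j * pd i φ p * pd j φ p) ≤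
      h * ∑ i, ∑ j, gInv p i j * pd i (pd j φ) p := by
  have hps : s ∈ nhds p := hs.mem_nhds hp
  have hηfun : η = fun x => Real.exp ((1 - φ x) / h) - 1 := funext hη
  subst hηfun
  set η : EuclideanSpace ℝ (Fin n) → ℝ := fun x => Real.exp ((1 - φ x) / h) - 1 with hηdef
  -- smoothness facts
  have hφcd : ∀ x ∈ s, ContDiffAt ℝ (⊤ : ℕ∞) φ x := fun x hx => hφ.contDiffAt (hs.mem_nhds hx)
  have hacd : ∀ x ∈ s, ContDiffAt ℝ (⊤ : ℕ∞) a x := fun x hx => ha.contDiffAt (hs.mem_nhds hx)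
  have hηcd : ∀ x ∈ s, ContDiffAt ℝ (⊤ : ℕ∞) η x := by
    intro x hx
    exact ((Real.contDiff_exp.contDiffAt.comp x
      ((contDiffAt_const.sub (hφcd x hx)).div_const h)).sub contDiffAt_const)
  have hφd : ∀ x ∈ s, DifferentiableAt ℝ φ x := fun x hx => (hφcd x hx).differentiableAt (by simp)
  have had : ∀ x ∈ s, DifferentiableAt ℝ a x := fun x hx => (hacd x hx).differentiableAt (by simp)
  have hηd : ∀ x ∈ s, DifferentiableAt ℝ η x := fun x hx => (hηcd x hx).differentiableAt (by simp)
  have hprod : ContDiffAt ℝ (⊤ : ℕ∞) (fun x => η x * a x) p := (hηcd p hp).mul (hacd p hp)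
  -- master inequality
  have key0 : ∑ i, ∑ j, gInv p i j * pd i (pd j (fun x => η x * a x)) p ≤ 0 :=
    lap_nonpos hprod hmax (hgpos p hp)
  -- first order conditions
  have hfoc : ∀ i, pd i η p = -(η p / a p) * pd i a p := by
    intro i
    have h0 : fderiv ℝ (fun x => η x * a x) p = 0 := hmax.fderiv_eq_zero
    have h1 : pd i (fun x => η x * a x) p = 0 := by
      rw [pd, h0]; rfl
    rw [pd_mul (hηd p hp) (had p hp) i] at h1
    have hane : a p ≠ 0 := (hapos p hp).ne'
    field_simp
    linarith
  -- first derivatives of η on s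
  have hpdη : ∀ x ∈ s, ∀ j, pd j η x =
      Real.exp ((1 - φ x) / h) * (-(pd j φ x) / h) := by
    intro x hx j
    have e1 : pd j η x = pd j (fun y => Real.exp ((1 - φ y) / h)) x := by
      rw [hηdef]
      exact pd_sub_const 1 j
    have hud : DifferentiableAt ℝ (fun y => (1 - φ y) / h) x := by
      simp only [div_eq_inv_mul]
      exact ((differentiableAt_const (1:ℝ)).sub (hφd x hx)).const_mul h⁻¹
    rw [e1, pd_exp hud j, pd_const_sub_div (hφd x hx) 1 h j]
  -- second derivatives of η*a at p
  have hexp2 : ∀ i j, pd i (pd j (fun x => η x * a x)) p =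
      η p * pd i (pd j a) p + pd j a p * pd i η p
        + (a p * pd i (pd j η) p + pd j η p * pd i a p) := by
    intro i j
    have hEq : pd j (fun x => η x * a x) =ᶠ[nhds p]
        fun x => η x * pd j a x + a x * pd j η x := by
      filter_upwards [hps] with x hx
      exact pd_mul (hηd x hx) (had x hx) j
    rw [pd_congr hEq i,
      pd_add ((hηd p hp).fun_mul (diffAt_pd (hacd p hp) j))
        ((had p hp).fun_mul (diffAt_pd (hηcd p hp) j)) i,
      pd_mul (hηd p hp) (diffAt_pd (hacd p hp) j) i,
      pd_mul (had p hp) (diffAt_pd (hηcd p hp) j) i]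
  -- second derivatives of η at p
  have hHη : ∀ i j, pd i (pd j η) p =
      Real.exp ((1 - φ p) / h) * (-(pd i (pd j φ) p) / h)
        + (-(pd j φ p) / h) * (Real.exp ((1 - φ p) / h) * (-(pd i φ p) / h)) := by
    intro i j
    have hEq : pd j η =ᶠ[nhds p]
        fun x => Real.exp ((1 - φ x) / h) * (-(pd j φ x) / h) := by
      filter_upwards [hps] with x hx
      exact hpdη x hx j
    have hud : DifferentiableAt ℝ (fun y => (1 - φ y) / h) p := by
      simp only [div_eq_inv_mul]
      exact ((differentiableAt_const (1:ℝ)).sub (hφd p hp)).const_mul h⁻¹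
    have hed : DifferentiableAt ℝ (fun y => Real.exp ((1 - φ y) / h)) p := hud.exp
    have hgd : DifferentiableAt ℝ (fun y => -(pd j φ y) / h) p := by
      have : (fun y => -(pd j φ y) / h) = fun y => -(pd j φ) y / h := rfl
      rw [this]
      simp only [div_eq_inv_mul]
      exact ((diffAt_pd (hφcd p hp) j).neg).const_mul h⁻¹
    rw [pd_congr hEq i, pd_mul hed hgd i, pd_exp hud i, pd_const_sub_div (hφd p hp) 1 h i,
      pd_neg_div (diffAt_pd (hφcd p hp) j) h i]
  -- abbreviations
  set Gaa := ∑ i, ∑ j, gInv p i j * pd i a p * pd j a p with hGaa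
  set La := ∑ i, ∑ j, gInv p i j * pd i (pd j a) p with hLa
  set Lη := ∑ i, ∑ j, gInv p i j * pd i (pd j η) p with hLη
  set Gφ := ∑ i, ∑ j, gInv p i j * pd i φ p * pd j φ p with hGφ
  set Lφ := ∑ i, ∑ j, gInv p i j * pd i (pd j φ) p with hLφ
  have hane : a p ≠ 0 := (hapos p hp).ne'
  have hhne : h ≠ 0 := hh.ne'
  -- expansion of the key inequality
  have e1 : ∀ i j : Fin n, gInv p i j * pd i (pd j (fun x => η x * a x)) p =
      η p * (gInv p i j * pd i (pd j a) p) + a p * (gInv p i j * pd i (pd j η) p)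
        - (2 * η p / a p) * (gInv p i j * pd i a p * pd j a p) := by
    intro i j
    rw [hexp2 i j, hfoc i, hfoc j]
    field_simp
    ring
  have keyexp : η p * La + a p * Lη - (2 * η p / a p) * Gaa ≤ 0 := by
    calc η p * La + a p * Lη - (2 * η p / a p) * Gaa
        = ∑ i, ∑ j, gInv p i j * pd i (pd j (fun x => η x * a x)) p := by
          simp only [e1, hGaa, hLa, hLη, Finset.sum_add_distrib, Finset.sum_sub_distrib,
            ← Finset.mul_sum]
      _ ≤ 0 := key0
  -- part 1
  have part1 : a p * Lη ≤ 0 := by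
    have hJ : 2 * Gaa / a p ≤ La := hJac
    have hη0 : 0 < η p := hηp
    have ejoin : 2 * η p / a p * Gaa = η p * (2 * Gaa / a p) := by
      field_simp
    have h5 := mul_le_mul_of_nonneg_left hJ hη0.le
    linarith
  refine ⟨part1, ?_⟩
  -- part 2: expand Lη in terms of φ
  set E := Real.exp ((1 - φ p) / h) with hE
  have hEpos : 0 < E := Real.exp_pos _
  have e2 : ∀ i j : Fin n, gInv p i j * pd i (pd j η) p =
      (E / (h * h)) * (gInv p i j * pd i φ p * pd j φ p)
        - (E / h) * (gInv p i j * pd i (pd j φ) p) := by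
    intro i j
    rw [hHη i j]
    field_simp
    ring
  have hLηval : Lη = (E / (h * h)) * Gφ - (E / h) * Lφ := by
    rw [hLη, hGφ, hLφ]
    simp only [e2, Finset.sum_sub_distrib, ← Finset.mul_sum]
  have hLηnp : Lη ≤ 0 := nonpos_of_mul_nonpos_right part1 (hapos p hp)
  rw [hLηval] at hLηnp
  have hdiv : E / (h * h) * Gφ - E / h * Lφ = (E * Gφ - E * (h * Lφ)) / (h * h) := by
    field_simp
  rw [hdiv] at hLηnp
  have h4 : E * Gφ - E * (h * Lφ) ≤ 0 := by
    by_contra hc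
    push_neg at hc
    have := div_pos hc (mul_pos hh hh)
    linarith
  exact le_of_mul_le_mul_left (by linarith) hEpos
end
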